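/- arXiv:2011.06957 — 3 statements merged into one kernel-verified Lean document; each statement's English description precedes it below -/
import Mathlib

section
/- Let X, B > 0, let x_1,…,x_n ∈ ℝ^d with ‖x_t‖₂ ≤ X, and let θ_1,…,θ_n ∈ ℝ^d with ‖θ_t‖₂ ≤ B. Suppose 1 = t_1 < ⋯ < t_{m+1} = n+1 are restart times such that for each batch j, Σ_{t=t_j}^{t_{j+1}−2} ‖θ_t − θ_{t+1}‖₁ ≤ C/m. Define θ̄_t := (1/(t_{j+1}−t_j)) Σ_{s=t_j}^{t_{j+1}−1} θ_s for t_j ≤ t < t_{j+1}. Then Σ_{t=1}^n (x_tᵀθ̄_t − x_tᵀθ_t)² ≤ X² n (C/m)² + 4 X² B² m. -/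
/-!
Inside a batch the parameters move by at most `C / m` in `ℓ¹`, hence (as `ℓ² ≤ ℓ¹`) by at most
`C / m` in the Euclidean norm between any two of its points. The batch average is a convex
combination of these points, so it lies in the closed ball of radius `C / m` around each of them,
and Cauchy–Schwarz bounds every squared prediction error by `X² (C / m)²`.
-/

open Finset

theorem EuclideanSpace.norm_le_sum_abs {ι : Type*} [Fintype ι] (v : EuclideanSpace ℝ ι) :
    ‖v‖ ≤ ∑ i, |v i| := by
  rw [EuclideanSpace.norm_eq, Real.sqrt_le_left (sum_nonneg fun i _ => abs_nonneg _)]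
  simpa only [Real.norm_eq_abs] using
    sum_sq_le_sq_sum_of_nonneg (s := univ) fun i _ => abs_nonneg (v i)

theorem Nat.exists_mem_Ico_le_lt_succ {α : Type*} [LinearOrder α] (t : ℕ → α) {a b : ℕ} {s : α}
    (hab : a ≤ b) (ha : t a ≤ s) (hb : s < t b) :
    ∃ j ∈ Ico a b, t j ≤ s ∧ s < t (j + 1) := by
  induction b, hab using Nat.le_induction with
  | base => exact absurd (ha.trans_lt hb) (lt_irrefl _)
  | succ b hab ih =>
    rcases le_or_gt (t b) s with hbs | hsb
    · exact ⟨b, mem_Ico.2 ⟨hab, b.lt_succ_self⟩, hbs, hb⟩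
    · obtain ⟨j, hj, hjs⟩ := ih hsb
      exact ⟨j, Ico_subset_Ico_right b.le_succ hj, hjs⟩

theorem norm_sub_le_of_mem_Ico {E : Type*} [SeminormedAddCommGroup E] (f : ℕ → E)
    {p q u s : ℕ} {K : ℝ} (hTV : ∑ v ∈ Ico p (q - 1), ‖f v - f (v + 1)‖ ≤ K)
    (hu : u ∈ Ico p q) (hs : s ∈ Ico p q) :
    ‖f u - f s‖ ≤ K := by
  wlog hus : u ≤ s generalizing u s
  · rw [norm_sub_rev]; exact this hs hu (le_of_not_ge hus)
  rw [mem_Ico] at hu hs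
  calc ‖f u - f s‖ ≤ ∑ v ∈ Ico u s, ‖f v - f (v + 1)‖ := by
        simpa only [dist_eq_norm] using dist_le_Ico_sum_dist f hus
    _ ≤ ∑ v ∈ Ico p (q - 1), ‖f v - f (v + 1)‖ :=
        sum_le_sum_of_subset_of_nonneg (Ico_subset_Ico hu.1 (by omega))
          fun _ _ _ => norm_nonneg _
    _ ≤ K := hTV

section Averaging

variable {E : Type*} [NormedAddCommGroup E] [NormedSpace ℝ E]

theorem norm_average_sub_le {ι : Type*} {S : Finset ι} (hS : S.Nonempty) (f : ι → E) {g : E}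
    {K : ℝ} (hf : ∀ u ∈ S, ‖f u - g‖ ≤ K) :
    ‖(#S : ℝ)⁻¹ • ∑ u ∈ S, f u - g‖ ≤ K := by
  have hmem := (convex_closedBall g K).sum_mem (t := S) (w := fun _ => (#S : ℝ)⁻¹)
    (fun _ _ => by positivity) (by simp [hS.card_ne_zero])
    (fun u hu => mem_closedBall_iff_norm.2 (hf u hu))
  rwa [← smul_sum, mem_closedBall_iff_norm] at hmem

theorem norm_blockAverage_sub_le (f : ℕ → E) {p q s : ℕ} {K : ℝ}
    (hTV : ∑ v ∈ Ico p (q - 1), ‖f v - f (v + 1)‖ ≤ K) (hs : s ∈ Ico p q) :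
    ‖(1 / ((q : ℝ) - p)) • ∑ u ∈ Ico p q, f u - f s‖ ≤ K := by
  have hcard : ((q : ℝ) - p) = #(Ico p q) := by
    rw [Nat.card_Ico, Nat.cast_sub ((mem_Ico.1 hs).1.trans (mem_Ico.1 hs).2.le)]
  rw [hcard, one_div]
  exact norm_average_sub_le ⟨s, hs⟩ f fun u hu => norm_sub_le_of_mem_Ico f hTV hu hs

end Averaging

theorem sq_inner_sub_inner_le {F : Type*} [NormedAddCommGroup F] [InnerProductSpace ℝ F]
    {x a b : F} {X K : ℝ} (hx : ‖x‖ ≤ X) (hab : ‖a - b‖ ≤ K) :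
    (inner ℝ x a - inner ℝ x b) ^ 2 ≤ X ^ 2 * K ^ 2 := by
  rw [← inner_sub_right, ← mul_pow, ← sq_abs]
  gcongr
  calc |inner ℝ x (a - b)| ≤ ‖x‖ * ‖a - b‖ := abs_real_inner_le_norm _ _
    _ ≤ X * K := mul_le_mul hx hab (norm_nonneg _) ((norm_nonneg _).trans hx)

theorem restart_approx_error_linear_general (n m d : ℕ) (X B C : ℝ)
    (x θ θbar : ℕ → EuclideanSpace ℝ (Fin d))
    (t : ℕ → ℕ)
    (hx : ∀ s ∈ Finset.Icc 1 n, ‖x s‖ ≤ X)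
    (ht1 : t 1 = 1) (htm : t (m + 1) = n + 1)
    (hTV : ∀ j ∈ Finset.Icc 1 m,
      ∑ s ∈ Finset.Ico (t j) (t (j + 1) - 1), ∑ i, |θ s i - θ (s + 1) i| ≤ C / m)
    (hbar : ∀ j ∈ Finset.Icc 1 m, ∀ s ∈ Finset.Ico (t j) (t (j + 1)),
      θbar s = (1 / ((t (j + 1) : ℝ) - t j)) • ∑ u ∈ Finset.Ico (t j) (t (j + 1)), θ u) :
    ∑ s ∈ Finset.Icc 1 n,
        (inner ℝ (x s) (θbar s) - inner ℝ (x s) (θ s) : ℝ) ^ 2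
      ≤ X ^ 2 * n * (C / m) ^ 2 + 4 * X ^ 2 * B ^ 2 * m := by
  have hpoint : ∀ s ∈ Icc 1 n,
      (inner ℝ (x s) (θbar s) - inner ℝ (x s) (θ s)) ^ 2 ≤ X ^ 2 * (C / m) ^ 2 := by
    intro s hs
    obtain ⟨hs1, hsn⟩ := mem_Icc.1 hs
    obtain ⟨j, hj, hsj⟩ := Nat.exists_mem_Ico_le_lt_succ t (Nat.le_add_left 1 m)
      (ht1 ▸ hs1) (htm ▸ Nat.lt_succ_of_le hsn)
    have hj : j ∈ Icc 1 m := by simpa only [mem_Ico, mem_Icc, Nat.lt_succ_iff] using hj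
    have hsj : s ∈ Ico (t j) (t (j + 1)) := mem_Ico.2 hsj
    have hTV₂ : ∑ v ∈ Ico (t j) (t (j + 1) - 1), ‖θ v - θ (v + 1)‖ ≤ C / m :=
      (sum_le_sum fun v _ => (θ v - θ (v + 1)).norm_le_sum_abs).trans (hTV j hj)
    rw [hbar j hj s hsj]
    exact sq_inner_sub_inner_le (hx s hs) (norm_blockAverage_sub_le θ hTV₂ hsj)
  calc _ ≤ ∑ _s ∈ Icc 1 n, X ^ 2 * (C / m) ^ 2 := sum_le_sum hpoint
    _ = X ^ 2 * n * (C / m) ^ 2 := by rw [sum_const, Nat.card_Icc, nsmul_eq_mul]; push_cast; ring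
    _ ≤ _ := le_add_of_nonneg_right (by positivity)

theorem restart_approx_error_linear (n m d : ℕ) (X B C : ℝ)
    (hX : 0 < X) (hB : 0 < B) (hm : 1 ≤ m)
    (x θ θbar : ℕ → EuclideanSpace ℝ (Fin d))
    (t : ℕ → ℕ)
    (hx : ∀ s ∈ Finset.Icc 1 n, ‖x s‖ ≤ X)
    (hθ : ∀ s ∈ Finset.Icc 1 n, ‖θ s‖ ≤ B)
    (ht1 : t 1 = 1) (htm : t (m + 1) = n + 1)
    (hmono : ∀ j ∈ Finset.Icc 1 m, t j < t (j + 1))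
    (hTV : ∀ j ∈ Finset.Icc 1 m,
      ∑ s ∈ Finset.Ico (t j) (t (j + 1) - 1), ∑ i, |θ s i - θ (s + 1) i| ≤ C / m)
    (hbar : ∀ j ∈ Finset.Icc 1 m, ∀ s ∈ Finset.Ico (t j) (t (j + 1)),
      θbar s = (1 / ((t (j + 1) : ℝ) - t j)) • ∑ u ∈ Finset.Ico (t j) (t (j + 1)), θ u) :
    ∑ s ∈ Finset.Icc 1 n,
        (inner ℝ (x s) (θbar s) - inner ℝ (x s) (θ s) : ℝ) ^ 2
      ≤ X ^ 2 * n * (C / m) ^ 2 + 4 * X ^ 2 * B ^ 2 * m :=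
  restart_approx_error_linear_general n m d X B C x θ θbar t hx ht1 htm hTV hbar
end

section
/- Let K be an n×n real symmetric positive semidefinite matrix with eigenvalues λ_1 ≥ ⋯ ≥ λ_n ≥ 0 satisfying Tr(K) ≤ nκ², and let λ > 0. Then Σ_{k=1}^n log(1 + λ_k/λ) ≤ log(e + e n κ²/λ) · Tr(K (K + λ I)⁻¹). -/
open Finset Matrix

private lemma pointwise_bound {μ M lam : ℝ} (hμ : 0 ≤ μ) (hM : μ ≤ M) (hlam : 0 < lam) :
    Real.log (1 + μ / lam) ≤ (1 + Real.log (1 + M / lam)) * (μ / (μ + lam)) := by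
  have hden : 0 < μ + lam := by positivity
  have hL0 : 0 ≤ Real.log (1 + μ / lam) := by
    apply Real.log_nonneg
    have : 0 ≤ μ / lam := by positivity
    linarith
  have hLt : Real.log (1 + μ / lam) ≤ μ / lam := by
    have h1 : (0:ℝ) < 1 + μ / lam := by positivity
    have := Real.log_le_sub_one_of_pos h1
    linarith
  have hLl : Real.log (1 + μ / lam) * lam ≤ μ := by
    have := (div_le_div_iff_of_pos_right hlam).mpr hLt
    calc Real.log (1 + μ / lam) * lam ≤ (μ / lam) * lam := by
          exact mul_le_mul_of_nonneg_right hLt hlam.le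
      _ = μ := div_mul_cancel₀ μ hlam.ne'
  have hLM : Real.log (1 + μ / lam) ≤ Real.log (1 + M / lam) := by
    apply Real.log_le_log (by positivity)
    have : μ / lam ≤ M / lam := by gcongr
    linarith
  have step1 : Real.log (1 + μ / lam)
      ≤ (1 + Real.log (1 + μ / lam)) * (μ / (μ + lam)) := by
    rw [← mul_div_assoc, le_div_iff₀ hden]
    nlinarith
  calc Real.log (1 + μ / lam) ≤ (1 + Real.log (1 + μ / lam)) * (μ / (μ + lam)) := step1
    _ ≤ (1 + Real.log (1 + M / lam)) * (μ / (μ + lam)) := by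
        apply mul_le_mul_of_nonneg_right (by linarith) (by positivity)

theorem logdet_le_deff (n : ℕ) (κ lam : ℝ) (hκ : 0 < κ) (hlam : 0 < lam)
    (K : Matrix (Fin n) (Fin n) ℝ) (hK : K.PosSemidef)
    (htr : K.trace ≤ n * κ ^ 2) :
    ∑ k, Real.log (1 + hK.isHermitian.eigenvalues k / lam)
      ≤ Real.log (Real.exp 1 + Real.exp 1 * n * κ ^ 2 / lam)
        * (K * (K + lam • (1 : Matrix (Fin n) (Fin n) ℝ))⁻¹).trace := by
  set μ := hK.isHermitian.eigenvalues with hμ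
  set U : Matrix (Fin n) (Fin n) ℝ := (hK.isHermitian.eigenvectorUnitary : Matrix (Fin n) (Fin n) ℝ) with hU
  have hUU : U * star U = 1 := (Matrix.mem_unitaryGroup_iff).mp hK.isHermitian.eigenvectorUnitary.2
  have hUU' : star U * U = 1 := (Matrix.mem_unitaryGroup_iff').mp hK.isHermitian.eigenvectorUnitary.2
  have hspec : K = U * Matrix.diagonal μ * star U := by
    have := hK.isHermitian.spectral_theorem
    simpa using this
  have hne : ∀ i, μ i + lam ≠ 0 := fun i => by
    have := hK.eigenvalues_nonneg i
    positivity
  -- trace identity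
  have htrace : (K * (K + lam • (1 : Matrix (Fin n) (Fin n) ℝ))⁻¹).trace
      = ∑ k, μ k / (μ k + lam) := by
    have hKl : K + lam • (1 : Matrix (Fin n) (Fin n) ℝ)
        = U * Matrix.diagonal (fun i => μ i + lam) * star U := by
      have h1 : (lam • (1 : Matrix (Fin n) (Fin n) ℝ))
          = U * (lam • (1 : Matrix (Fin n) (Fin n) ℝ)) * star U := by
        rw [Matrix.mul_smul, Matrix.smul_mul, mul_one, hUU]
      have hd : Matrix.diagonal μ + lam • (1 : Matrix (Fin n) (Fin n) ℝ)
          = Matrix.diagonal (fun i => μ i + lam) := by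
        rw [← Matrix.diagonal_one, ← Matrix.diagonal_smul, Matrix.diagonal_add]
        simp
      rw [hspec]
      conv_lhs => rw [h1]
      rw [← Matrix.add_mul, ← Matrix.mul_add, hd]
    have hinv : (K + lam • (1 : Matrix (Fin n) (Fin n) ℝ))⁻¹
        = U * Matrix.diagonal (fun i => (μ i + lam)⁻¹) * star U := by
      rw [hKl]
      apply Matrix.inv_eq_right_inv
      calc U * Matrix.diagonal (fun i => μ i + lam) * star U
              * (U * Matrix.diagonal (fun i => (μ i + lam)⁻¹) * star U)
          = U * (Matrix.diagonal (fun i => μ i + lam)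
              * ((star U * U) * Matrix.diagonal (fun i => (μ i + lam)⁻¹))) * star U := by
            noncomm_ring
        _ = 1 := by
            rw [hUU', one_mul, Matrix.diagonal_mul_diagonal]
            have : (fun i => (μ i + lam) * (μ i + lam)⁻¹) = fun _ => (1:ℝ) := by
              funext i; exact mul_inv_cancel₀ (hne i)
            rw [this, Matrix.diagonal_one, mul_one, hUU]
    rw [hinv]
    conv_lhs => rw [hspec]
    have : U * Matrix.diagonal μ * star U * (U * Matrix.diagonal (fun i => (μ i + lam)⁻¹) * star U)
        = U * (Matrix.diagonal μ * Matrix.diagonal (fun i => (μ i + lam)⁻¹)) * star U := by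
      calc U * Matrix.diagonal μ * star U * (U * Matrix.diagonal (fun i => (μ i + lam)⁻¹) * star U)
          = U * (Matrix.diagonal μ
              * ((star U * U) * Matrix.diagonal (fun i => (μ i + lam)⁻¹))) * star U := by
            noncomm_ring
        _ = _ := by rw [hUU', one_mul]
    rw [this, Matrix.trace_mul_cycle, ← Matrix.mul_assoc, hUU', one_mul,
      Matrix.diagonal_mul_diagonal, Matrix.trace_diagonal]
    simp [div_eq_mul_inv]
  -- sum of eigenvalues = trace
  have hsum : ∑ k, μ k = K.trace := by
    conv_rhs => rw [hspec]
    rw [Matrix.trace_mul_cycle, hUU', one_mul, Matrix.trace_diagonal]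
  have hμnn : ∀ i, 0 ≤ μ i := fun i => hK.eigenvalues_nonneg i
  have hμle : ∀ k, μ k ≤ n * κ ^ 2 := fun k => by
    calc μ k ≤ ∑ i, μ i := Finset.single_le_sum (fun i _ => hμnn i) (Finset.mem_univ k)
      _ = K.trace := hsum
      _ ≤ n * κ ^ 2 := htr
  have hC : Real.log (Real.exp 1 + Real.exp 1 * n * κ ^ 2 / lam)
      = 1 + Real.log (1 + n * κ ^ 2 / lam) := by
    rw [show Real.exp 1 + Real.exp 1 * n * κ ^ 2 / lam
        = Real.exp 1 * (1 + n * κ ^ 2 / lam) by ring,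
      Real.log_mul (Real.exp_ne_zero 1) (by positivity), Real.log_exp]
  rw [htrace, hC, Finset.mul_sum]
  apply Finset.sum_le_sum
  intro k _
  exact pointwise_bound (hμnn k) (hμle k) hlam
end

section
/- Let θ_1,…,θ_n ∈ ℝ (with θ_0 := 0) and suppose 1 = t_1 < ⋯ < t_{m+1} = n+1 satisfy Σ_{t=t_i}^{t_{i+1}−2} |θ_t − θ_{t+1}| ≤ C/m for each i ∈ {1,…,m}. Then Σ_{i=2}^{m} |θ̄_{t_{i−1}:(t_i−1)} − θ_{t_i}| ≤ Σ_{t=1}^{n−1} |θ_t − θ_{t+1}|, where θ̄_{r:s} := (1/(s−r+1)) Σ_{t=r}^{s} θ_t. -/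
open Finset
open scoped BigOperators

/-!
The boundary error of batch `i` is the average over `u ∈ [t_{i-1}, t_i)` of `θ u - θ t_i`, and each
such difference is at most the variation of `θ` on `[t_{i-1}, t_i]`. These windows are disjoint
pieces of `[1, n]`, so the errors add up to at most the total variation.
-/

theorem abs_expect_sub_le {ι : Type*} {s : Finset ι} (hs : s.Nonempty) {f : ι → ℝ} {c B : ℝ}
    (h : ∀ i ∈ s, |f i - c| ≤ B) : |𝔼 i ∈ s, f i - c| ≤ B := by
  rw [← expect_const hs c, ← expect_sub_distrib]
  exact (abs_expect_le s _).trans (expect_le hs h)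

theorem abs_sub_le_sum_Ico_abs_sub_succ (θ : ℕ → ℝ) {a b : ℕ} (hab : a ≤ b) :
    |θ a - θ b| ≤ ∑ s ∈ Ico a b, |θ s - θ (s + 1)| := by
  simpa only [Real.dist_eq] using dist_le_Ico_sum_dist θ hab

theorem abs_expect_Ico_sub_le (θ : ℕ → ℝ) {a b : ℕ} (hab : a < b) :
    |𝔼 u ∈ Ico a b, θ u - θ b| ≤ ∑ s ∈ Ico a b, |θ s - θ (s + 1)| := by
  refine abs_expect_sub_le (nonempty_Ico.2 hab) fun u hu => ?_
  have hu := mem_Ico.1 hu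
  exact (abs_sub_le_sum_Ico_abs_sub_succ θ hu.2.le).trans <|
    sum_le_sum_of_subset_of_nonneg (Ico_subset_Ico_left hu.1) fun _ _ _ => abs_nonneg _

theorem expect_Ico_eq_one_div_mul_sum (θ : ℕ → ℝ) {a b : ℕ} (hab : a ≤ b) :
    𝔼 u ∈ Ico a b, θ u = 1 / ((b : ℝ) - a) * ∑ u ∈ Ico a b, θ u := by
  rw [expect_eq_sum_div_card, Nat.card_Ico, Nat.cast_sub hab, div_eq_inv_mul, one_div]

theorem sum_Ico_sum_Ico_eq_sum_Ico {M : Type*} [AddCommMonoid M] (g : ℕ → M) {t : ℕ → ℕ}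
    {a b : ℕ} (hab : a ≤ b) (ht : MonotoneOn t (Set.Icc a b)) :
    ∑ i ∈ Ico a b, ∑ s ∈ Ico (t i) (t (i + 1)), g s = ∑ s ∈ Ico (t a) (t b), g s := by
  induction b, hab using Nat.le_induction with
  | base => simp
  | succ b hab ih =>
    rw [sum_Ico_succ_top hab, ih (ht.mono (Set.Icc_subset_Icc_right b.le_succ)),
      sum_Ico_consecutive _ (ht ⟨le_rfl, by omega⟩ ⟨hab, by omega⟩ hab)
        (ht ⟨hab, by omega⟩ ⟨by omega, le_rfl⟩ b.le_succ)]

theorem boundary_errors_le_tv_general (n m : ℕ) (θ : ℕ → ℝ) (t : ℕ → ℕ)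
    (hm : 1 ≤ m)
    (ht1 : t 1 = 1) (htm : t (m + 1) = n + 1)
    (hmono : ∀ i ∈ Finset.Icc 1 m, t i < t (i + 1)) :
    ∑ i ∈ Finset.Icc 2 m,
        |(1 / ((t i : ℝ) - t (i - 1))) * ∑ u ∈ Finset.Ico (t (i - 1)) (t i), θ u - θ (t i)|
      ≤ ∑ s ∈ Finset.Icc 1 (n - 1), |θ s - θ (s + 1)| := by
  have hmono' : MonotoneOn t (Set.Icc 1 m) :=
    monotoneOn_of_le_succ Set.ordConnected_Icc fun i _ hi _ => (hmono i (by simpa using hi)).le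
  have htmn : t m ≤ n := by have := hmono m (by simp [hm]); omega
  have hlt : ∀ i ∈ Ico 1 m, t i < t (i + 1) := fun i hi => hmono i (Ico_subset_Icc_self hi)
  calc ∑ i ∈ Icc 2 m,
        |(1 / ((t i : ℝ) - t (i - 1))) * ∑ u ∈ Ico (t (i - 1)) (t i), θ u - θ (t i)|
      = ∑ i ∈ Ico 1 m, |𝔼 u ∈ Ico (t i) (t (i + 1)), θ u - θ (t (i + 1))| := by
        rw [← Ico_add_one_right_eq_Icc, show 2 = 1 + 1 from rfl, ← sum_Ico_add']
        refine sum_congr rfl fun i hi => ?_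
        rw [Nat.add_sub_cancel, expect_Ico_eq_one_div_mul_sum θ (hlt i hi).le]
    _ ≤ ∑ i ∈ Ico 1 m, ∑ s ∈ Ico (t i) (t (i + 1)), |θ s - θ (s + 1)| :=
        sum_le_sum fun i hi => abs_expect_Ico_sub_le θ (hlt i hi)
    _ = ∑ s ∈ Ico (t 1) (t m), |θ s - θ (s + 1)| := sum_Ico_sum_Ico_eq_sum_Ico _ hm hmono'
    _ ≤ ∑ s ∈ Ico 1 n, |θ s - θ (s + 1)| := by
        rw [ht1]
        exact sum_le_sum_of_subset_of_nonneg (Ico_subset_Ico_right htmn) fun _ _ _ => abs_nonneg _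
    _ = ∑ s ∈ Icc 1 (n - 1), |θ s - θ (s + 1)| :=
        sum_congr (by ext; simp only [mem_Ico, mem_Icc]; omega) fun _ _ => rfl

theorem boundary_errors_le_tv (n m : ℕ) (C : ℝ) (θ : ℕ → ℝ) (t : ℕ → ℕ)
    (hn : 1 ≤ n) (hm : 1 ≤ m) (hθ0 : θ 0 = 0)
    (ht1 : t 1 = 1) (htm : t (m + 1) = n + 1)
    (hmono : ∀ i ∈ Finset.Icc 1 m, t i < t (i + 1))
    (hTV : ∀ i ∈ Finset.Icc 1 m,
      ∑ s ∈ Finset.Ico (t i) (t (i + 1) - 1), |θ s - θ (s + 1)| ≤ C / m) :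
    ∑ i ∈ Finset.Icc 2 m,
        |(1 / ((t i : ℝ) - t (i - 1))) * ∑ u ∈ Finset.Ico (t (i - 1)) (t i), θ u - θ (t i)|
      ≤ ∑ s ∈ Finset.Icc 1 (n - 1), |θ s - θ (s + 1)| :=
  boundary_errors_le_tv_general n m θ t hm ht1 htm hmono
end
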